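/- arXiv:1911.04364 — 2 statements merged into one kernel-verified Lean document; each statement's English description precedes it below -/
import Mathlib

section
/- Let N ≥ 1, g ∈ ℝ, l, m : Fin N → ℝ, and fix ω ∈ (Fin N → ℝ) and i ∈ Fin N. Define L : (Fin N → ℝ) → ℝ by L(θ) = (1/2)·Σ_{j} m j · (u_j(θ)² + v_j(θ)²) - g·Σ_{j} m j · y_j(θ), where u_j(θ) = Σ_{k ≤ j} l k · ω k · cos(θ k), v_j(θ) = Σ_{k ≤ j} l k · ω k · sin(θ k), and y_j(θ) = -Σ_{k ≤ j} l k · cos(θ k). Then the partial derivative of L with respect to the coordinate θ_i equals -g · l i · sin(θ i) · (Σ_{j : i ≤ j} m j) - l i · ω i · Σ_{j ∈ Fin N} l j · ω j · sin(θ i - θ j) · (Σ_{k : max(i,j) ≤ k} m k). -/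
/-!
Moving θ_i changes only the k = i terms of the partial sums u_j, v_j, y_j, so only the bobs
j ≥ i contribute. For such j, u_j ∂u_j + v_j ∂v_j = -l_i ω_i Σ_{k ≤ j} l_k ω_k sin(θ_i - θ_k) by
the subtraction formula for sin, and exchanging the sums over j ≥ i and k ≤ j collects the masses
into Σ_{j ≥ max(i,k)} m_j.
-/

open Finset Real

section
variable {α R : Type*} [LinearOrder α] [Fintype α] [LocallyFiniteOrderTop α]
  [LocallyFiniteOrderBot α] [CommSemiring R]

theorem sum_Ici_mul_sum_Iic (i : α) (m f : α → R) :
    ∑ j ∈ Ici i, m j * ∑ k ∈ Iic j, f k = ∑ k, f k * ∑ j ∈ Ici (max i k), m j := by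
  simp_rw [mul_sum]
  rw [sum_comm' (t' := univ) (s' := fun k => Ici (max i k))]
  · simp_rw [mul_comm]
  · intro j k
    simp
end

section
variable {ι : Type*} [DecidableEq ι]

theorem hasDerivAt_add_smul_single_apply (θ : ι → ℝ) (i k : ι) (x : ℝ) :
    HasDerivAt (fun s : ℝ => (θ + s • (Pi.single i 1 : ι → ℝ)) k)
      ((Pi.single i 1 : ι → ℝ) k) x := by
  simpa using ((hasDerivAt_id x).mul_const ((Pi.single i 1 : ι → ℝ) k)).const_add (θ k)

theorem hasDerivAt_sum_mul_comp_add_smul_single (S : Finset ι) (c : ι → ℝ) {φ φ' : ℝ → ℝ}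
    (hφ : ∀ x, HasDerivAt φ (φ' x) x) (θ : ι → ℝ) (i : ι) :
    HasDerivAt (fun s : ℝ => ∑ k ∈ S, c k * φ ((θ + s • (Pi.single i 1 : ι → ℝ)) k))
      (if i ∈ S then c i * φ' (θ i) else 0) 0 := by
  refine (HasDerivAt.fun_sum (u := S) fun k _ =>
    ((hφ _).comp 0 (hasDerivAt_add_smul_single_apply θ i k 0)).const_mul (c k)).congr_deriv ?_
  simp [Pi.single_apply]
end

theorem sin_mul_sum_cos_sub_cos_mul_sum_sin {ι : Type*} (S : Finset ι) (c y : ι → ℝ) (x : ℝ) :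
    sin x * ∑ k ∈ S, c k * cos (y k) - cos x * ∑ k ∈ S, c k * sin (y k)
      = ∑ k ∈ S, c k * sin (x - y k) := by
  simp_rw [mul_sum, ← sum_sub_distrib, sin_sub]
  exact sum_congr rfl fun k _ => by ring

theorem npendulum_lagrangian_partial_theta_general
    (N : ℕ) (g : ℝ) (l m : Fin N → ℝ)
    (ω : Fin N → ℝ) (i : Fin N) (θ : Fin N → ℝ)
    (L : (Fin N → ℝ) → ℝ)
    (hL : L = fun θ' =>
      (1/2) * ∑ j : Fin N, m j *
          ((∑ k ∈ Finset.Iic j, l k * ω k * Real.cos (θ' k)) ^ 2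
            + (∑ k ∈ Finset.Iic j, l k * ω k * Real.sin (θ' k)) ^ 2)
        - g * ∑ j : Fin N, m j * (-∑ k ∈ Finset.Iic j, l k * Real.cos (θ' k))) :
    deriv (fun s : ℝ => L (θ + s • (Pi.single i 1 : Fin N → ℝ))) 0
      = -(g * l i * Real.sin (θ i) * ∑ j ∈ Finset.Ici i, m j)
        - l i * ω i * ∑ j : Fin N, l j * ω j * Real.sin (θ i - θ j)
            * ∑ k ∈ Finset.Ici (max i j), m k := by
  subst hL
  have hu (j : Fin N) := hasDerivAt_sum_mul_comp_add_smul_single (Iic j) (fun k => l k * ω k)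
    hasDerivAt_cos θ i
  have hv (j : Fin N) := hasDerivAt_sum_mul_comp_add_smul_single (Iic j) (fun k => l k * ω k)
    hasDerivAt_sin θ i
  have hy (j : Fin N) := hasDerivAt_sum_mul_comp_add_smul_single (Iic j) l hasDerivAt_cos θ i
  have hkin := (HasDerivAt.fun_sum (u := univ) fun j _ =>
    (((hu j).pow 2).add ((hv j).pow 2)).const_mul (m j)).const_mul (1 / 2 : ℝ)
  have hpot := (HasDerivAt.fun_sum (u := univ) fun j _ =>
    (hy j).neg.const_mul (m j)).const_mul g
  refine (hkin.sub hpot).deriv.trans ?_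
  calc _ = ∑ j ∈ Ici i, m j * (-(g * l i * sin (θ i))
          - l i * ω i * ∑ k ∈ Iic j, l k * ω k * sin (θ i - θ k)) := by
        rw [← filter_le_eq_Ici, sum_filter, mul_sum, mul_sum, ← sum_sub_distrib]
        refine sum_congr rfl fun j _ => ?_
        simp only [zero_smul, add_zero, mem_Iic]
        split_ifs
        · rw [← sin_mul_sum_cos_sub_cos_mul_sum_sin]
          ring
        · simp
    _ = -(g * l i * sin (θ i) * ∑ j ∈ Ici i, m j)
          - l i * ω i * ∑ j ∈ Ici i, m j * ∑ k ∈ Iic j, l k * ω k * sin (θ i - θ k) := by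
        rw [mul_sum, mul_sum, ← sum_neg_distrib, ← sum_sub_distrib]
        exact sum_congr rfl fun j _ => by ring
    _ = _ := by rw [sum_Ici_mul_sum_Iic]

theorem npendulum_lagrangian_partial_theta
    (N : ℕ) (hN : 1 ≤ N) (g : ℝ) (l m : Fin N → ℝ)
    (ω : Fin N → ℝ) (i : Fin N) (θ : Fin N → ℝ)
    (L : (Fin N → ℝ) → ℝ)
    (hL : L = fun θ' =>
      (1/2) * ∑ j : Fin N, m j *
          ((∑ k ∈ Finset.Iic j, l k * ω k * Real.cos (θ' k)) ^ 2
            + (∑ k ∈ Finset.Iic j, l k * ω k * Real.sin (θ' k)) ^ 2)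
        - g * ∑ j : Fin N, m j * (-∑ k ∈ Finset.Iic j, l k * Real.cos (θ' k))) :
    deriv (fun s : ℝ => L (θ + s • (Pi.single i 1 : Fin N → ℝ))) 0
      = -(g * l i * Real.sin (θ i) * ∑ j ∈ Finset.Ici i, m j)
        - l i * ω i * ∑ j : Fin N, l j * ω j * Real.sin (θ i - θ j)
            * ∑ k ∈ Finset.Ici (max i j), m k :=
  npendulum_lagrangian_partial_theta_general N g l m ω i θ L hL
end

section
/- Let N ≥ 1, g ∈ ℝ, l, m : Fin N → ℝ, and fix θ ∈ (Fin N → ℝ) and i ∈ Fin N. Define L : (Fin N → ℝ) → ℝ by L(ω) = (1/2)·Σ_{j} m j · (u_j(ω)² + v_j(ω)²) - g·Σ_{j} m j · y_j, where u_j(ω) = Σ_{k ≤ j} l k · ω k · cos(θ k), v_j(ω) = Σ_{k ≤ j} l k · ω k · sin(θ k), and y_j = -Σ_{k ≤ j} l k · cos(θ k). Then the partial derivative of L with respect to the coordinate ω_i equals l i · Σ_{j ∈ Fin N} l j · ω j · cos(θ i - θ j) · (Σ_{k : max(i,j) ≤ k} m k). -/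
/-!
The potential term does not depend on `ω`, and moving `ω` along `e_i` moves the velocity
`(u_j, v_j)` of bob `j` by `l_i (cos θ_i, sin θ_i)` if `i ≤ j` and not at all otherwise. So the
derivative is `Σ_{j ≥ i} m_j l_i (u_j cos θ_i + v_j sin θ_i)`, and the subtraction formula for the
cosine turns the bracket into `Σ_{k ≤ j} l_k ω_k cos (θ_i - θ_k)`. Exchanging the sums over
`i ≤ j` and `k ≤ j` collects the masses of the bobs `j ≥ max i k`.
-/

open Finset

section

variable {ι : Type*}

theorem hasDerivAt_sum_mul_add_smul_single_mul [DecidableEq ι] (s : Finset ι)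
    (a b ω : ι → ℝ) (i : ι) (t : ℝ) :
    HasDerivAt (fun t : ℝ => ∑ k ∈ s, a k * (ω + t • (Pi.single i 1 : ι → ℝ)) k * b k)
      (if i ∈ s then a i * b i else 0) t := by
  have hline : ∀ k, HasDerivAt (fun t : ℝ => (ω + t • (Pi.single i 1 : ι → ℝ)) k)
      ((Pi.single i 1 : ι → ℝ) k) t := fun k => by
    simpa using ((hasDerivAt_id t).mul_const ((Pi.single i 1 : ι → ℝ) k)).const_add (ω k)
  refine (HasDerivAt.fun_sum fun k _ =>
    ((hline k).const_mul (a k)).mul_const (b k)).congr_deriv ?_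
  simp [Pi.single_apply]

theorem sum_mul_cos_mul_cos_add_sum_mul_sin_mul_sin (s : Finset ι) (a θ : ι → ℝ) (φ : ℝ) :
    (∑ k ∈ s, a k * Real.cos (θ k)) * Real.cos φ + (∑ k ∈ s, a k * Real.sin (θ k)) * Real.sin φ
      = ∑ k ∈ s, a k * Real.cos (φ - θ k) := by
  simp only [sum_mul, ← sum_add_distrib, Real.cos_sub]
  exact sum_congr rfl fun k _ => by ring

theorem sum_Ici_sum_Iic_comm [LinearOrder ι] [Fintype ι] [LocallyFiniteOrderTop ι]
    [LocallyFiniteOrderBot ι] {M : Type*} [AddCommMonoid M] (i : ι) (f : ι → ι → M) :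
    ∑ j ∈ Ici i, ∑ k ∈ Iic j, f j k = ∑ k, ∑ j ∈ Ici (max i k), f j k :=
  Finset.sum_comm' fun j k => by simp

theorem HasDerivAt.half_sum_mul_sq_add_sq {s : Finset ι} {m : ι → ℝ} {U V : ι → ℝ → ℝ}
    {U' V' : ι → ℝ} {t : ℝ} (hU : ∀ j ∈ s, HasDerivAt (U j) (U' j) t)
    (hV : ∀ j ∈ s, HasDerivAt (V j) (V' j) t) :
    HasDerivAt (fun t => 1 / 2 * ∑ j ∈ s, m j * (U j t ^ 2 + V j t ^ 2))
      (∑ j ∈ s, m j * (U j t * U' j + V j t * V' j)) t := by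
  refine ((HasDerivAt.fun_sum fun j hj =>
    (((hU j hj).fun_pow 2).add ((hV j hj).fun_pow 2)).const_mul (m j)).const_mul
      (1 / 2 : ℝ)).congr_deriv ?_
  rw [mul_sum]
  exact sum_congr rfl fun j _ => by push_cast; ring

end

theorem npendulum_lagrangian_partial_omega_general
    (N : ℕ) (g : ℝ) (l m : Fin N → ℝ)
    (θ : Fin N → ℝ) (i : Fin N) (ω : Fin N → ℝ)
    (L : (Fin N → ℝ) → ℝ)
    (hL : L = fun ω' =>
      (1/2) * ∑ j : Fin N, m j *
          ((∑ k ∈ Finset.Iic j, l k * ω' k * Real.cos (θ k)) ^ 2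
            + (∑ k ∈ Finset.Iic j, l k * ω' k * Real.sin (θ k)) ^ 2)
        - g * ∑ j : Fin N, m j * (-∑ k ∈ Finset.Iic j, l k * Real.cos (θ k))) :
    deriv (fun s : ℝ => L (ω + s • (Pi.single i 1 : Fin N → ℝ))) 0
      = l i * ∑ j : Fin N, l j * ω j * Real.cos (θ i - θ j)
          * ∑ k ∈ Finset.Ici (max i j), m k := by
  subst hL
  have hu := fun j : Fin N =>
    hasDerivAt_sum_mul_add_smul_single_mul (Iic j) l (fun k => Real.cos (θ k)) ω i 0
  have hv := fun j : Fin N =>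
    hasDerivAt_sum_mul_add_smul_single_mul (Iic j) l (fun k => Real.sin (θ k)) ω i 0
  rw [((HasDerivAt.half_sum_mul_sq_add_sq (m := m) (fun j _ => hu j)
    (fun j _ => hv j)).sub_const _).deriv, zero_smul, add_zero]
  simp only [mem_Iic]
  have hterm : ∀ j, m j *
      ((∑ k ∈ Iic j, l k * ω k * Real.cos (θ k)) * (if i ≤ j then l i * Real.cos (θ i) else 0)
        + (∑ k ∈ Iic j, l k * ω k * Real.sin (θ k)) * (if i ≤ j then l i * Real.sin (θ i) else 0))
      = if i ≤ j then l i * ∑ k ∈ Iic j, l k * ω k * Real.cos (θ i - θ k) * m j else 0 := by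
    intro j
    split_ifs
    · rw [← sum_mul, ← sum_mul_cos_mul_cos_add_sum_mul_sin_mul_sin]
      ring
    · simp
  rw [sum_congr rfl fun j _ => hterm j, ← sum_filter, filter_le_eq_Ici,
    ← mul_sum, sum_Ici_sum_Iic_comm]
  simp only [← mul_sum]

theorem npendulum_lagrangian_partial_omega
    (N : ℕ) (hN : 1 ≤ N) (g : ℝ) (l m : Fin N → ℝ)
    (θ : Fin N → ℝ) (i : Fin N) (ω : Fin N → ℝ)
    (L : (Fin N → ℝ) → ℝ)
    (hL : L = fun ω' =>
      (1/2) * ∑ j : Fin N, m j *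
          ((∑ k ∈ Finset.Iic j, l k * ω' k * Real.cos (θ k)) ^ 2
            + (∑ k ∈ Finset.Iic j, l k * ω' k * Real.sin (θ k)) ^ 2)
        - g * ∑ j : Fin N, m j * (-∑ k ∈ Finset.Iic j, l k * Real.cos (θ k))) :
    deriv (fun s : ℝ => L (ω + s • (Pi.single i 1 : Fin N → ℝ))) 0
      = l i * ∑ j : Fin N, l j * ω j * Real.cos (θ i - θ j)
          * ∑ k ∈ Finset.Ici (max i j), m k :=
  npendulum_lagrangian_partial_omega_general N g l m θ i ω L hL
end
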